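/- arXiv:1701.02000 — 2 statements merged into one kernel-verified Lean document; each statement's English description precedes it below -/
import Mathlib

section
/- Let G be a connected simple graph with n vertices and m edges, ν'_i = μ'_i - ζ(G)/n for the eigenvalues μ'_i of L_ε(G), and let ν'_max and ν'_min denote the maximum and minimum of |ν'_i|, with ν'_max + ν'_min > 0. Then LE_ε(G) ≥ (1/(ν'_max + ν'_min))·[E_1(G) - ζ(G)²/n + 2m + n·ν'_max·ν'_min]. -/
open Finset

section Aux
open Matrix
variable {n : Type*} [Fintype n] [DecidableEq n] {A : Matrix n n ℝ}

lemma my_star_mul_self_mul_eq_diagonal (hA : A.IsHermitian) :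
    star (hA.eigenvectorUnitary : Matrix n n ℝ) * A * (hA.eigenvectorUnitary : Matrix n n ℝ)
      = diagonal (RCLike.ofReal ∘ hA.eigenvalues) := by
  have h := hA.conjStarAlgAut_star_eigenvectorUnitary
  rw [Unitary.conjStarAlgAut_apply] at h
  simpa using h

lemma my_trace_eq_sum_eigenvalues (hA : A.IsHermitian) :
    A.trace = ∑ i, hA.eigenvalues i := by
  have h := congrArg Matrix.trace (my_star_mul_self_mul_eq_diagonal hA)
  rw [Matrix.trace_mul_cycle,
    (Matrix.mem_unitaryGroup_iff).mp (hA.eigenvectorUnitary).2, Matrix.one_mul] at h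
  simpa [Matrix.trace_diagonal] using h

lemma my_trace_sq_eq_sum_sq (hA : A.IsHermitian) :
    (A * A).trace = ∑ i, hA.eigenvalues i ^ 2 := by
  have key : star (hA.eigenvectorUnitary : Matrix n n ℝ) * (A * A) *
      (hA.eigenvectorUnitary : Matrix n n ℝ)
      = diagonal (RCLike.ofReal ∘ hA.eigenvalues) * diagonal (RCLike.ofReal ∘ hA.eigenvalues) := by
    rw [← my_star_mul_self_mul_eq_diagonal hA]
    have hU : (hA.eigenvectorUnitary : Matrix n n ℝ) *
        star (hA.eigenvectorUnitary : Matrix n n ℝ) = 1 :=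
      (Matrix.mem_unitaryGroup_iff).mp (hA.eigenvectorUnitary).2
    simp only [Matrix.mul_assoc]
    rw [← Matrix.mul_assoc (hA.eigenvectorUnitary : Matrix n n ℝ)
      (star (hA.eigenvectorUnitary : Matrix n n ℝ)), hU, Matrix.one_mul]
  have h := congrArg Matrix.trace key
  rw [Matrix.trace_mul_cycle,
    (Matrix.mem_unitaryGroup_iff).mp (hA.eigenvectorUnitary).2, Matrix.one_mul,
    Matrix.diagonal_mul_diagonal] at h
  simpa [Matrix.trace_diagonal, sq] using h

end Aux

/-- Diaz–Metcalf-type bound: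
`LE_ε(G) ≥ (1/(ν'_max + ν'_min))·[E_1(G) - ζ(G)²/n + 2m + n·ν'_max·ν'_min]`. -/
theorem eccLaplacianEnergy_diazMetcalf_lower_bound
    {V : Type*} [Fintype V] [DecidableEq V]
    (G : SimpleGraph V) [DecidableRel G.Adj] (hG : G.Connected)
    (ecc : V → ℕ) (hecc : ∀ v, ecc v = Finset.univ.sup fun u => G.dist v u)
    (m : ℕ) (hm : m = G.edgeFinset.card)
    (L : Matrix V V ℝ)
    (hL : L = Matrix.diagonal (fun v => (ecc v : ℝ)) - G.adjMatrix ℝ)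
    (hH : L.IsHermitian)
    (ν : V → ℝ)
    (hν : ∀ v, ν v = hH.eigenvalues v - (∑ u, (ecc u : ℝ)) / Fintype.card V)
    (νmax νmin : ℝ)
    (hmax : IsGreatest (Set.range fun v => |ν v|) νmax)
    (hmin : IsLeast (Set.range fun v => |ν v|) νmin)
    (hpos : 0 < νmax + νmin) :
    ∑ v, |ν v| ≥
      (1 / (νmax + νmin)) *
        ((∑ v, (ecc v : ℝ) ^ 2) - (∑ v, (ecc v : ℝ)) ^ 2 / Fintype.card V
          + 2 * m + (Fintype.card V : ℝ) * νmax * νmin) := by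
  classical
  have hne : Nonempty V := hG.nonempty
  have hn0 : (0 : ℝ) < Fintype.card V := by exact_mod_cast Fintype.card_pos
  set ζ : ℝ := ∑ u, (ecc u : ℝ)
  set c : ℝ := ζ / Fintype.card V
  -- trace facts
  have htr : L.trace = ζ := by
    rw [hL, Matrix.trace_sub, SimpleGraph.trace_adjMatrix, Matrix.trace_diagonal]
    simp [ζ]
  have hsum_eig : ∑ v, hH.eigenvalues v = ζ := by
    rw [← my_trace_eq_sum_eigenvalues hH, htr]
  -- trace of L²
  have htr2 : (L * L).trace = (∑ v, (ecc v : ℝ) ^ 2) + 2 * m := by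
    rw [hL]
    have expand : (Matrix.diagonal (fun v => (ecc v : ℝ)) - G.adjMatrix ℝ) *
        (Matrix.diagonal (fun v => (ecc v : ℝ)) - G.adjMatrix ℝ)
        = Matrix.diagonal (fun v => (ecc v : ℝ)) * Matrix.diagonal (fun v => (ecc v : ℝ))
          - Matrix.diagonal (fun v => (ecc v : ℝ)) * G.adjMatrix ℝ
          - G.adjMatrix ℝ * Matrix.diagonal (fun v => (ecc v : ℝ))
          + G.adjMatrix ℝ * G.adjMatrix ℝ := by noncomm_ring
    rw [expand, Matrix.trace_add, Matrix.trace_sub, Matrix.trace_sub]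
    have t1 : (Matrix.diagonal (fun v => (ecc v : ℝ)) *
        Matrix.diagonal (fun v => (ecc v : ℝ))).trace = ∑ v, (ecc v : ℝ) ^ 2 := by
      rw [Matrix.diagonal_mul_diagonal]
      simp [Matrix.trace_diagonal, sq]
    have t2 : (Matrix.diagonal (fun v => (ecc v : ℝ)) * G.adjMatrix ℝ).trace = 0 := by
      simp only [Matrix.trace, Matrix.diag, Matrix.mul_apply, Matrix.diagonal_apply,
        SimpleGraph.adjMatrix_apply, mul_ite, mul_one, mul_zero, ite_and]
      refine Finset.sum_eq_zero fun x _ => ?_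
      rw [Finset.sum_eq_zero]
      intro u _
      by_cases h : x = u
      · subst h; simp
      · simp [h]
    have t3 : (G.adjMatrix ℝ * Matrix.diagonal (fun v => (ecc v : ℝ))).trace = 0 := by
      simp [Matrix.trace, Matrix.diag, Matrix.mul_diagonal, SimpleGraph.adjMatrix_apply]
    have t4 : (G.adjMatrix ℝ * G.adjMatrix ℝ).trace = 2 * m := by
      have : ∀ v, (G.adjMatrix ℝ * G.adjMatrix ℝ) v v = (G.degree v : ℝ) := fun v =>
        G.adjMatrix_mul_self_apply_self v
      rw [Matrix.trace]
      simp only [Matrix.diag]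
      rw [Finset.sum_congr rfl fun v _ => this v]
      rw [← Nat.cast_sum, G.sum_degrees_eq_twice_card_edges, hm]
      push_cast; ring
    rw [t1, t2, t3, t4]; ring
  have hsum_eig_sq : ∑ v, hH.eigenvalues v ^ 2 = (∑ v, (ecc v : ℝ) ^ 2) + 2 * m := by
    rw [← my_trace_sq_eq_sum_sq hH, htr2]
  -- sum of ν²
  have hsum_nu_sq : ∑ v, ν v ^ 2
      = (∑ v, (ecc v : ℝ) ^ 2) + 2 * m - ζ ^ 2 / Fintype.card V := by
    have : ∑ v, ν v ^ 2 = ∑ v, (hH.eigenvalues v ^ 2 - 2 * c * hH.eigenvalues v + c ^ 2) := by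
      apply Finset.sum_congr rfl
      intro v _
      rw [hν v]; ring
    rw [this, Finset.sum_add_distrib, Finset.sum_sub_distrib, ← Finset.mul_sum,
      hsum_eig_sq, hsum_eig, Finset.sum_const, Finset.card_univ, nsmul_eq_mul]
    have hc : c = ζ / Fintype.card V := rfl
    field_simp [hc]
    rw [hc]; field_simp; ring
  -- Diaz–Metcalf
  have hDM : ∑ v, ν v ^ 2 + (Fintype.card V : ℝ) * νmax * νmin
      ≤ (νmax + νmin) * ∑ v, |ν v| := by
    have key : ∀ v, ν v ^ 2 + νmax * νmin ≤ (νmax + νmin) * |ν v| := by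
      intro v
      have h1 : |ν v| ≤ νmax := hmax.2 ⟨v, rfl⟩
      have h2 : νmin ≤ |ν v| := hmin.2 ⟨v, rfl⟩
      nlinarith [sq_abs (ν v)]
    calc ∑ v, ν v ^ 2 + (Fintype.card V : ℝ) * νmax * νmin
        = ∑ v, (ν v ^ 2 + νmax * νmin) := by
          rw [Finset.sum_add_distrib, Finset.sum_const, Finset.card_univ, nsmul_eq_mul]; ring
      _ ≤ ∑ v, (νmax + νmin) * |ν v| := Finset.sum_le_sum fun v _ => key v
      _ = (νmax + νmin) * ∑ v, |ν v| := by rw [Finset.mul_sum]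
  rw [ge_iff_le, one_div, inv_mul_le_iff₀ hpos]
  calc (∑ v, (ecc v : ℝ) ^ 2) - ζ ^ 2 / Fintype.card V
        + 2 * m + (Fintype.card V : ℝ) * νmax * νmin
      = ∑ v, ν v ^ 2 + (Fintype.card V : ℝ) * νmax * νmin := by rw [hsum_nu_sq]; ring
    _ ≤ (νmax + νmin) * ∑ v, |ν v| := hDM
end

section
/- Let G be a connected simple graph with n vertices and m edges, ν'_i = μ'_i - ζ(G)/n for the eigenvalues μ'_i of L_ε(G), and let ν'_max and ν'_min be the maximum and minimum of |ν'_i|, with ν'_min > 0. Then LE_ε(G) ≥ (2√(ν'_max·ν'_min)/(ν'_max + ν'_min))·√(n·E_1(G) - ζ(G)² + 2mn). -/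
open Finset Matrix

lemma my_trace_eq {n : Type*} [Fintype n] [DecidableEq n] (A : Matrix n n ℝ)
    (hA : A.IsHermitian) : A.trace = ∑ i, hA.eigenvalues i := by
  conv_lhs => rw [hA.spectral_theorem, Unitary.conjStarAlgAut_apply]
  rw [Matrix.trace_mul_cycle,
    (Matrix.mem_unitaryGroup_iff').mp (hA.eigenvectorUnitary).2, Matrix.one_mul]
  simp [Matrix.trace_diagonal]

lemma my_trace_sq_eq {n : Type*} [Fintype n] [DecidableEq n] (A : Matrix n n ℝ)
    (hA : A.IsHermitian) : (A * A).trace = ∑ i, hA.eigenvalues i ^ 2 := by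
  set U : Matrix n n ℝ := (hA.eigenvectorUnitary : Matrix n n ℝ)
  set D : Matrix n n ℝ := Matrix.diagonal (RCLike.ofReal ∘ hA.eigenvalues)
  have hU : star U * U = 1 := (Matrix.mem_unitaryGroup_iff').mp (hA.eigenvectorUnitary).2
  have h : A * A = U * (D * D) * star U := by
    conv_lhs => rw [hA.spectral_theorem]
    calc U * D * star U * (U * D * star U)
        = U * D * ((star U * U) * D) * star U := by noncomm_ring
      _ = U * (D * D) * star U := by rw [hU, Matrix.one_mul]; noncomm_ring
  rw [h, Matrix.trace_mul_cycle, ← Matrix.mul_assoc, hU, Matrix.one_mul]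
  simp [D, Matrix.diagonal_mul_diagonal, Matrix.trace_diagonal, sq]

/-- Pólya–Szegő-type bound:
`LE_ε(G) ≥ (2√(ν'_max·ν'_min)/(ν'_max + ν'_min))·√(n·E_1(G) - ζ(G)² + 2mn)`. -/
theorem eccLaplacianEnergy_polyaSzego_lower_bound
    {V : Type*} [Fintype V] [DecidableEq V]
    (G : SimpleGraph V) [DecidableRel G.Adj] (hG : G.Connected)
    (ecc : V → ℕ) (hecc : ∀ v, ecc v = Finset.univ.sup fun u => G.dist v u)
    (m : ℕ) (hm : m = G.edgeFinset.card)
    (L : Matrix V V ℝ)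
    (hL : L = Matrix.diagonal (fun v => (ecc v : ℝ)) - G.adjMatrix ℝ)
    (hH : L.IsHermitian)
    (ν : V → ℝ)
    (hν : ∀ v, ν v = hH.eigenvalues v - (∑ u, (ecc u : ℝ)) / Fintype.card V)
    (νmax νmin : ℝ)
    (hmax : IsGreatest (Set.range fun v => |ν v|) νmax)
    (hmin : IsLeast (Set.range fun v => |ν v|) νmin)
    (hpos : 0 < νmin) :
    ∑ v, |ν v| ≥
      (2 * Real.sqrt (νmax * νmin) / (νmax + νmin)) *
        Real.sqrt ((Fintype.card V : ℝ) * (∑ v, (ecc v : ℝ) ^ 2)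
          - (∑ v, (ecc v : ℝ)) ^ 2 + 2 * m * Fintype.card V) := by
  classical
  have : Nonempty V := hG.nonempty
  set n : ℝ := (Fintype.card V : ℝ) with hn
  have hnpos : (0 : ℝ) < n := by
    rw [hn]; exact_mod_cast Fintype.card_pos
  set ζ : ℝ := ∑ u, (ecc u : ℝ) with hζ
  set lam : V → ℝ := hH.eigenvalues with hlam
  -- trace identities
  have hS1 : ∑ v, lam v = ζ := by
    rw [← my_trace_eq L hH, hL]
    simp [Matrix.trace, Matrix.diag, Matrix.sub_apply, Matrix.diagonal_apply_eq,
      SimpleGraph.adjMatrix_apply]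
    rfl
  have hS2 : ∑ v, lam v ^ 2 = (∑ v, (ecc v : ℝ) ^ 2) + 2 * m := by
    rw [← my_trace_sq_eq L hH, hL]
    have hDA : Matrix.trace ((Matrix.diagonal fun v => (ecc v : ℝ)) * G.adjMatrix ℝ) = 0 := by
      simp only [Matrix.trace, Matrix.diag, Matrix.diagonal_mul, SimpleGraph.adjMatrix_apply]
      simp
    have hAD : Matrix.trace (G.adjMatrix ℝ * (Matrix.diagonal fun v => (ecc v : ℝ))) = 0 := by
      simp only [Matrix.trace, Matrix.diag, Matrix.mul_diagonal, SimpleGraph.adjMatrix_apply]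
      simp
    have hAA : Matrix.trace (G.adjMatrix ℝ * G.adjMatrix ℝ) = 2 * m := by
      have : ∀ i, (G.adjMatrix ℝ * G.adjMatrix ℝ) i i = (G.degree i : ℝ) := fun i =>
        G.adjMatrix_mul_self_apply_self i
      simp only [Matrix.trace, Matrix.diag]
      rw [Finset.sum_congr rfl fun i _ => this i]
      rw [← Nat.cast_sum, SimpleGraph.sum_degrees_eq_twice_card_edges, hm]
      push_cast; ring
    have hexp : (Matrix.diagonal (fun v => (ecc v : ℝ)) - G.adjMatrix ℝ) *
        (Matrix.diagonal (fun v => (ecc v : ℝ)) - G.adjMatrix ℝ)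
        = (Matrix.diagonal fun v => (ecc v : ℝ)) * (Matrix.diagonal fun v => (ecc v : ℝ))
          - (Matrix.diagonal fun v => (ecc v : ℝ)) * G.adjMatrix ℝ
          - G.adjMatrix ℝ * (Matrix.diagonal fun v => (ecc v : ℝ))
          + G.adjMatrix ℝ * G.adjMatrix ℝ := by noncomm_ring
    rw [hexp, Matrix.trace_add, Matrix.trace_sub, Matrix.trace_sub, hDA, hAD, hAA,
      Matrix.diagonal_mul_diagonal, Matrix.trace_diagonal]
    simp [sq]
  -- sum of squared deviations
  set Q : ℝ := ∑ v, ν v ^ 2 with hQ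
  have hQval : n * Q = n * (∑ v, (ecc v : ℝ) ^ 2) - ζ ^ 2 + 2 * m * n := by
    have hc : ∀ v, ν v ^ 2 = lam v ^ 2 - 2 * (ζ / n) * lam v + (ζ / n) ^ 2 := fun v => by
      rw [hν v]; ring
    have : Q = (∑ v, lam v ^ 2) - 2 * (ζ / n) * (∑ v, lam v) + n * (ζ / n) ^ 2 := by
      rw [hQ, Finset.sum_congr rfl fun v _ => hc v, Finset.sum_add_distrib,
        Finset.sum_sub_distrib, ← Finset.mul_sum, Finset.sum_const, nsmul_eq_mul,
        Finset.card_univ, ← hn]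
    rw [this, hS1, hS2]
    field_simp
    ring
  have hQnonneg : 0 ≤ Q := Finset.sum_nonneg fun v _ => sq_nonneg _
  -- bounds on |ν v|
  have hub : ∀ v, |ν v| ≤ νmax := fun v => hmax.2 ⟨v, rfl⟩
  have hlb : ∀ v, νmin ≤ |ν v| := fun v => hmin.2 ⟨v, rfl⟩
  have hmaxpos : 0 < νmax := by
    exact hpos.trans_le ((hlb (Classical.arbitrary V)).trans (hub _))
  set S : ℝ := ∑ v, |ν v| with hS
  -- Polya-Szego key step
  have hkey : Q + n * (νmin * νmax) ≤ (νmax + νmin) * S := by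
    have h1 : ∀ v, 0 ≤ (|ν v| - νmin) * (νmax - |ν v|) := fun v =>
      mul_nonneg (by linarith [hlb v]) (by linarith [hub v])
    have h2 : 0 ≤ ∑ v, (|ν v| - νmin) * (νmax - |ν v|) :=
      Finset.sum_nonneg fun v _ => h1 v
    have h3 : ∑ v, (|ν v| - νmin) * (νmax - |ν v|)
        = (νmax + νmin) * S - Q - n * (νmin * νmax) := by
      rw [hS, hQ, Finset.mul_sum, ← Finset.sum_sub_distrib]
      have : ∀ v, (|ν v| - νmin) * (νmax - |ν v|)
          = ((νmax + νmin) * |ν v| - ν v ^ 2) - νmin * νmax := by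
        intro v
        have := sq_abs (ν v)
        nlinarith [sq_abs (ν v)]
      rw [Finset.sum_congr rfl fun v _ => this v, Finset.sum_sub_distrib,
        Finset.sum_const, nsmul_eq_mul, Finset.card_univ, ← hn]
    linarith [h2, h3.symm ▸ h2]
  -- AM-GM
  have hy : 0 ≤ n * (νmin * νmax) := by positivity
  have hamgm : 2 * Real.sqrt (Q * (n * (νmin * νmax))) ≤ Q + n * (νmin * νmax) := by
    nlinarith [Real.sq_sqrt hQnonneg, Real.sq_sqrt hy, Real.sqrt_nonneg Q,
      Real.sqrt_nonneg (n * (νmin * νmax)),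
      sq_nonneg (Real.sqrt Q - Real.sqrt (n * (νmin * νmax))),
      Real.sqrt_mul_self hQnonneg,
      (Real.sqrt_mul hQnonneg (n * (νmin * νmax))).symm]
  have hsqrt_split : Real.sqrt (Q * (n * (νmin * νmax)))
      = Real.sqrt (νmax * νmin) * Real.sqrt (n * Q) := by
    rw [← Real.sqrt_mul (by positivity : (0:ℝ) ≤ νmax * νmin) (n * Q)]
    congr 1; ring
  -- finish
  have harg : (Fintype.card V : ℝ) * (∑ v, (ecc v : ℝ) ^ 2)
      - (∑ v, (ecc v : ℝ)) ^ 2 + 2 * m * Fintype.card V = n * Q := by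
    rw [hQval]
  rw [ge_iff_le, harg]
  have hden : 0 < νmax + νmin := by linarith
  rw [div_mul_eq_mul_div, div_le_iff₀ hden]
  calc 2 * Real.sqrt (νmax * νmin) * Real.sqrt (n * Q)
      = 2 * Real.sqrt (Q * (n * (νmin * νmax))) := by rw [hsqrt_split]; ring
    _ ≤ Q + n * (νmin * νmax) := hamgm
    _ ≤ (νmax + νmin) * S := hkey
    _ = S * (νmax + νmin) := by ring
end
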